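/- Let m, d ≥ 1. Let S ∈ GL(m, ℝ), O ∈ O(d), and let a₁, a₅, a₉ > 0 satisfy a₅/a₁ = a₉/a₅ =: μ. Let C₁ be a d×m real matrix, let c : ℝ^d → ℝ^{1×m} be a linear map into row m-vectors, let a₄ ∈ ℝ^d be a column vector, a₈ ∈ ℝ^d a row vector, c₂ a row m-vector, and a₇ ∈ ℝ. Define the (m + d + 2)×(m + d + 2) block matrices (block sizes m, 1, d, 1): g = [[S, 0, 0, 0], [0, a₁, 0, 0], [C₁, a₄, a₅ O, 0], [c₂, a₇, a₈, a₉]] and, for a row vector v ∈ ℝ^d, N(v) = [[I_m, 0, 0, 0], [0, 1, 0, 0], [0, vᵀ, I_d, 0], [c(v), ‖v‖²/2, v, 1]]. If g · N(v) = N(μ v Oᵀ) · g for every v ∈ ℝ^d, then a₉ c(v) = c(μ v Oᵀ) S + (μ v Oᵀ) C₁ for every v ∈ ℝ^d. -/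
import Mathlib


open Matrix

/-- The holonomy matrix with block rows of sizes `m, 1, d, 1`:
`g = [[S,0,0,0],[0,a₁,0,0],[C₁,a₄,a₅O,0],[c₂,a₇,a₈,a₉]]`. -/
noncomputable def holMat15 (m d : ℕ) (S : Matrix (Fin m) (Fin m) ℝ)
    (a₁ a₅ a₇ a₉ : ℝ) (O : Matrix (Fin d) (Fin d) ℝ)
    (C₁ : Matrix (Fin d) (Fin m) ℝ) (a₄ a₈ : Fin d → ℝ) (c₂ : Fin m → ℝ) :
    Matrix (Fin m ⊕ Fin 1 ⊕ Fin d ⊕ Fin 1) (Fin m ⊕ Fin 1 ⊕ Fin d ⊕ Fin 1) ℝ :=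
  Matrix.of fun i j =>
    match i, j with
    | Sum.inl i, Sum.inl j => S i j
    | Sum.inl _, _ => 0
    | Sum.inr (Sum.inl _), Sum.inr (Sum.inl _) => a₁
    | Sum.inr (Sum.inl _), _ => 0
    | Sum.inr (Sum.inr (Sum.inl k)), Sum.inl j => C₁ k j
    | Sum.inr (Sum.inr (Sum.inl k)), Sum.inr (Sum.inl _) => a₄ k
    | Sum.inr (Sum.inr (Sum.inl k)), Sum.inr (Sum.inr (Sum.inl l)) => a₅ * O k l
    | Sum.inr (Sum.inr (Sum.inl _)), Sum.inr (Sum.inr (Sum.inr _)) => 0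
    | Sum.inr (Sum.inr (Sum.inr _)), Sum.inl j => c₂ j
    | Sum.inr (Sum.inr (Sum.inr _)), Sum.inr (Sum.inl _) => a₇
    | Sum.inr (Sum.inr (Sum.inr _)), Sum.inr (Sum.inr (Sum.inl l)) => a₈ l
    | Sum.inr (Sum.inr (Sum.inr _)), Sum.inr (Sum.inr (Sum.inr _)) => a₉

/-- The generalized cusp matrix with block rows of sizes `m, 1, d, 1`:
`N(v) = [[I_m,0,0,0],[0,1,0,0],[0,vᵀ,I_d,0],[c(v),‖v‖²/2,v,1]]`,
where `c` is a linear map into row `m`-vectors. -/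
noncomputable def cuspN15 (m d : ℕ) (c : (Fin d → ℝ) →ₗ[ℝ] (Fin m → ℝ))
    (v : Fin d → ℝ) :
    Matrix (Fin m ⊕ Fin 1 ⊕ Fin d ⊕ Fin 1) (Fin m ⊕ Fin 1 ⊕ Fin d ⊕ Fin 1) ℝ :=
  Matrix.of fun i j =>
    match i, j with
    | Sum.inl i, Sum.inl j => if i = j then 1 else 0
    | Sum.inl _, _ => 0
    | Sum.inr (Sum.inl _), Sum.inr (Sum.inl _) => 1
    | Sum.inr (Sum.inl _), _ => 0
    | Sum.inr (Sum.inr (Sum.inl k)), Sum.inr (Sum.inl _) => v k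
    | Sum.inr (Sum.inr (Sum.inl k)), Sum.inr (Sum.inr (Sum.inl l)) =>
        if k = l then 1 else 0
    | Sum.inr (Sum.inr (Sum.inl _)), _ => 0
    | Sum.inr (Sum.inr (Sum.inr _)), Sum.inl j => c v j
    | Sum.inr (Sum.inr (Sum.inr _)), Sum.inr (Sum.inl _) => dotProduct v v / 2
    | Sum.inr (Sum.inr (Sum.inr _)), Sum.inr (Sum.inr (Sum.inl l)) => v l
    | Sum.inr (Sum.inr (Sum.inr _)), Sum.inr (Sum.inr (Sum.inr _)) => 1

/-- equation (4.20) in Lemma 4.3 (K-is-a-cone) of the paper.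
If `g·N(v) = N(μ v Oᵀ)·g` for all `v`, where `μ = a₅/a₁ = a₉/a₅`, then
`a₉ c(v) = c(μ v Oᵀ) S + (μ v Oᵀ) C₁` for all `v`. -/
theorem stmt15 (m d : ℕ) (hm : 1 ≤ m) (hd : 1 ≤ d)
    (S : Matrix (Fin m) (Fin m) ℝ) (hS : IsUnit S)
    (O : Matrix (Fin d) (Fin d) ℝ) (hO : O ∈ Matrix.orthogonalGroup (Fin d) ℝ)
    (a₁ a₅ a₉ : ℝ) (ha₁ : 0 < a₁) (ha₅ : 0 < a₅) (ha₉ : 0 < a₉)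
    (μ : ℝ) (hμ₁ : μ = a₅ / a₁) (hμ₂ : μ = a₉ / a₅)
    (C₁ : Matrix (Fin d) (Fin m) ℝ) (a₄ a₈ : Fin d → ℝ) (c₂ : Fin m → ℝ) (a₇ : ℝ)
    (c : (Fin d → ℝ) →ₗ[ℝ] (Fin m → ℝ))
    (h : ∀ v : Fin d → ℝ,
      holMat15 m d S a₁ a₅ a₇ a₉ O C₁ a₄ a₈ c₂ * cuspN15 m d c v =
        cuspN15 m d c (μ • vecMul v Oᵀ) * holMat15 m d S a₁ a₅ a₇ a₉ O C₁ a₄ a₈ c₂) :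
    ∀ v : Fin d → ℝ,
      a₉ • c v = vecMul (c (μ • vecMul v Oᵀ)) S + vecMul (μ • vecMul v Oᵀ) C₁ := by
  intro v
  funext j
  have key := congrFun (congrFun (h v) (Sum.inr (Sum.inr (Sum.inr 0)))) (Sum.inl j)
  simp only [holMat15, cuspN15, Matrix.mul_apply, Fintype.sum_sum_type,
    Matrix.of_apply, Fin.sum_univ_one, Finset.sum_ite_eq, Finset.mem_univ,
    if_true, mul_ite, ite_mul, mul_one, one_mul, mul_zero, zero_mul, add_zero, zero_add, Finset.sum_ite_eq',
    Finset.sum_const_zero] at key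
  simp only [Pi.add_apply, Pi.smul_apply, smul_eq_mul, vecMul, dotProduct]
  simp only [Matrix.vecMul, dotProduct, Pi.smul_apply, smul_eq_mul] at key
  linarith [key]
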